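/- Let φ: C → C be a gauge-reversing map on a proper open convex cone with fixed point b. Then b is an isolated fixed point of φ if and only if the projective class of b is an isolated fixed point of the induced action of φ on the projective space P(C) of the cone. -/

import Mathlib

/-!
Gauge reversal makes `φ` anti-homogeneous, `φ (t • x) = t⁻¹ • φ x`, since `M(x, y) M(y, x) = 1`
forces `x = M(x, y) • y`. So if `φ x = μ • x`, then `√μ • x` is a genuine fixed point, and for
fixed points `z`, `b` gauge reversal gives `M(z, b) = M(b, z) =: m`, i.e. `d_H(z, b) = 2 log m`.
Then `m • b - z` and `m • z - b` lie in the closed cone, which puts `z - b` in the order interval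
`[-(m - 1) • b, (m - 1) • b]`; a closed pointed cone in finite dimension is normal (compactness of
the unit sphere), so `‖z - b‖ = O(m - 1)`. Conversely, norm-closeness to the interior point `b`
gives Hilbert-closeness, and a fixed point `l • b` has `l = M(l • b, b) = M(b, l • b) = l⁻¹`.
-/

open Set Filter

/-- The gauge of a cone: `M_C(x,y) = inf {λ > 0 | λ • y - x ∈ closure C}`. -/
noncomputable def coneGauge {V : Type*} [NormedAddCommGroup V] [NormedSpace ℝ V]
    (C : Set V) (x y : V) : ℝ :=
  sInf {l : ℝ | 0 < l ∧ l • y - x ∈ closure C}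

/-- A proper open convex cone. -/
def IsProperCone {V : Type*} [NormedAddCommGroup V] [NormedSpace ℝ V] (C : Set V) : Prop :=
  C.Nonempty ∧ IsOpen C ∧ Convex ℝ C ∧ (∀ x ∈ C, ∀ l : ℝ, 0 < l → l • x ∈ C) ∧
    closure C ∩ (-(closure C)) ⊆ {0}

/-- Hilbert's projective metric `d_H(x,y) = log (M_C(x,y) M_C(y,x))`. -/
noncomputable def hilbertDist {V : Type*} [NormedAddCommGroup V] [NormedSpace ℝ V]
    (C : Set V) (x y : V) : ℝ :=
  Real.log (coneGauge C x y * coneGauge C y x)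

open Metric Topology

section
variable {V : Type*} [NormedAddCommGroup V] [NormedSpace ℝ V] {C : Set V} {x y : V}

theorem coneGauge_nonneg : 0 ≤ coneGauge C x y :=
  Real.sInf_nonneg fun _ hl => hl.1.le

theorem coneGauge_le_of_smul_sub_mem {l : ℝ} (hl : 0 < l) (h : l • y - x ∈ closure C) :
    coneGauge C x y ≤ l :=
  csInf_le ⟨0, fun _ hm => hm.1.le⟩ ⟨hl, h⟩

theorem coneGauge_smul_right {a : ℝ} (ha : 0 < a) :
    coneGauge C x (a • y) = a⁻¹ * coneGauge C x y := by
  rw [coneGauge, coneGauge, ← smul_eq_mul, ← Real.sInf_smul_of_nonneg (inv_nonneg.2 ha.le)]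
  congr 1
  ext l
  rw [Set.mem_smul_set_iff_inv_smul_mem₀ (inv_ne_zero ha.ne'), inv_inv]
  simp only [Set.mem_ofPred_eq, smul_eq_mul, smul_smul, mul_comm l a, mul_pos_iff_of_pos_left ha]

end

namespace IsProperCone

variable {V : Type*} [NormedAddCommGroup V] [NormedSpace ℝ V] {C : Set V} {x y : V}

theorem isOpen (hC : IsProperCone C) : IsOpen C := hC.2.1

theorem smul_mem (hC : IsProperCone C) (hx : x ∈ C) {a : ℝ} (ha : 0 < a) : a • x ∈ C :=
  hC.2.2.2.1 x hx a ha

theorem zero_mem_closure (hC : IsProperCone C) : (0 : V) ∈ closure C := by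
  obtain ⟨⟨x, hx⟩, -, -, hsmul, -⟩ := hC
  have hlim : Tendsto (fun t : ℝ => t • x) (𝓝[>] 0) (𝓝 0) := by
    simpa using ((tendsto_id (x := 𝓝 (0 : ℝ))).smul_const x).mono_left nhdsWithin_le_nhds
  exact mem_closure_of_tendsto hlim (eventually_nhdsWithin_of_forall fun t ht => hsmul x hx t ht)

theorem smul_mem_closure_of_pos (hC : IsProperCone C) {a : ℝ} (ha : 0 < a)
    (hx : x ∈ closure C) : a • x ∈ closure C :=
  Set.MapsTo.closure (fun _ hz => hC.smul_mem hz ha) (continuous_const_smul a) hx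

theorem smul_mem_closure (hC : IsProperCone C) {a : ℝ} (ha : 0 ≤ a) (hx : x ∈ closure C) :
    a • x ∈ closure C := by
  rcases ha.eq_or_lt with rfl | ha
  · simpa using hC.zero_mem_closure
  · exact hC.smul_mem_closure_of_pos ha hx

theorem smul_mem_closure_iff (hC : IsProperCone C) {a : ℝ} (ha : 0 < a) :
    a • x ∈ closure C ↔ x ∈ closure C :=
  ⟨fun h => by simpa [smul_smul, ha.ne'] using hC.smul_mem_closure_of_pos (inv_pos.2 ha) h,
    hC.smul_mem_closure_of_pos ha⟩

theorem add_mem_closure (hC : IsProperCone C) (hx : x ∈ closure C) (hy : y ∈ closure C) :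
    x + y ∈ closure C := by
  have hmid : (2⁻¹ : ℝ) • x + (2⁻¹ : ℝ) • y ∈ closure C :=
    hC.2.2.1.closure hx hy (by norm_num) (by norm_num) (by norm_num)
  simpa [← smul_add] using hC.smul_mem_closure_of_pos two_pos hmid

theorem eq_zero_of_mem_closure_of_neg_mem_closure (hC : IsProperCone C)
    (hx : x ∈ closure C) (hx' : -x ∈ closure C) : x = 0 :=
  hC.2.2.2.2 ⟨hx, by simpa using hx'⟩

theorem zero_notMem [Nontrivial V] (hC : IsProperCone C) : (0 : V) ∉ C := by
  intro h0
  obtain ⟨v, hv⟩ := exists_ne (0 : V)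
  have hsmall : ∀ᶠ t : ℝ in 𝓝 0, t • v ∈ C :=
    (tendsto_id.smul_const v).eventually (by simpa using hC.isOpen.mem_nhds h0)
  obtain ⟨r, hr, hball⟩ := Metric.eventually_nhds_iff.1 hsmall
  have hmem : ∀ t : ℝ, |t| < r → t • v ∈ C := fun t ht => hball (by rwa [Real.dist_0_eq_abs])
  have hr2 : |r / 2| < r := by rw [abs_of_pos (by positivity)]; linarith
  have := hC.eq_zero_of_mem_closure_of_neg_mem_closure (subset_closure (hmem _ hr2))
    (by rw [← neg_smul]; exact subset_closure (hmem _ (by rwa [abs_neg])))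
  exact hv ((smul_eq_zero.1 this).resolve_left (by positivity))

theorem nonneg_of_smul_mem_closure [Nontrivial V] (hC : IsProperCone C) (hx : x ∈ C) {c : ℝ}
    (hc : c • x ∈ closure C) : 0 ≤ c := by
  by_contra! hc'
  have hneg : -x ∈ closure C := by
    simpa [smul_smul, hc'.ne] using hC.smul_mem_closure_of_pos (inv_pos.2 (neg_pos.2 hc')) hc
  have := hC.eq_zero_of_mem_closure_of_neg_mem_closure (subset_closure hx) hneg
  exact hC.zero_notMem (this ▸ hx)

theorem coneGauge_smul_left (hC : IsProperCone C) {a : ℝ} (ha : 0 < a) :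
    coneGauge C (a • x) y = a * coneGauge C x y := by
  rw [coneGauge, coneGauge, ← smul_eq_mul, ← Real.sInf_smul_of_nonneg ha.le]
  congr 1
  ext l
  rw [Set.mem_smul_set_iff_inv_smul_mem₀ ha.ne']
  simp only [Set.mem_ofPred_eq, smul_eq_mul, mul_pos_iff_of_pos_left (inv_pos.2 ha)]
  rw [← hC.smul_mem_closure_iff ha (x := (a⁻¹ * l) • y - x), smul_sub, smul_smul,
    mul_inv_cancel_left₀ ha.ne']

theorem hilbertDist_smul_left (hC : IsProperCone C) {a : ℝ} (ha : 0 < a) :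
    hilbertDist C (a • x) y = hilbertDist C x y := by
  rw [hilbertDist, hilbertDist, hC.coneGauge_smul_left ha, coneGauge_smul_right ha]
  congr 1
  field_simp

theorem coneGauge_smul_sub_mem (hC : IsProperCone C) (hy : y ∈ C) :
    coneGauge C x y • y - x ∈ closure C := by
  set S := {l : ℝ | 0 < l ∧ l • y - x ∈ closure C}
  have hne : S.Nonempty := by
    have hlim : Tendsto (fun l : ℝ => y - l⁻¹ • x) atTop (𝓝 y) := by
      simpa using tendsto_const_nhds.sub ((tendsto_inv_atTop_zero (𝕜 := ℝ)).smul_const x)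
    obtain ⟨l, hlC, hl⟩ :=
      ((hlim.eventually (hC.isOpen.mem_nhds hy)).and (eventually_gt_atTop 0)).exists
    refine ⟨l, hl, subset_closure ?_⟩
    simpa [smul_sub, smul_smul, hl.ne'] using hC.smul_mem hlC hl
  have hclosed : IsClosed {l : ℝ | l • y - x ∈ closure C} :=
    isClosed_closure.preimage (by fun_prop)
  exact hclosed.closure_subset_iff.2 (fun l hl => hl.2)
    (csInf_mem_closure hne ⟨0, fun _ hl => hl.1.le⟩)

theorem coneGauge_pos [Nontrivial V] (hC : IsProperCone C) (hx : x ∈ C) (hy : y ∈ C) :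
    0 < coneGauge C x y := by
  refine coneGauge_nonneg.lt_of_ne fun h => ?_
  have hneg := hC.coneGauge_smul_sub_mem (x := x) hy
  rw [← h, zero_smul, zero_sub, ← neg_one_smul ℝ x] at hneg
  linarith [hC.nonneg_of_smul_mem_closure hx hneg]

theorem coneGauge_self [Nontrivial V] (hC : IsProperCone C) (hx : x ∈ C) :
    coneGauge C x x = 1 := by
  refine le_antisymm (coneGauge_le_of_smul_sub_mem one_pos (by simpa using hC.zero_mem_closure)) ?_
  have h : (coneGauge C x x - 1) • x ∈ closure C := by
    simpa [sub_smul] using hC.coneGauge_smul_sub_mem (x := x) hx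
  linarith [hC.nonneg_of_smul_mem_closure hx h]

theorem one_le_coneGauge_mul [Nontrivial V] (hC : IsProperCone C) (hx : x ∈ C) (hy : y ∈ C) :
    1 ≤ coneGauge C x y * coneGauge C y x := by
  have hxy : coneGauge C x y • y - x ∈ closure C := hC.coneGauge_smul_sub_mem hy
  have hyx : coneGauge C y x • x - y ∈ closure C := hC.coneGauge_smul_sub_mem hx
  have h : (coneGauge C x y * coneGauge C y x - 1) • y ∈ closure C := by
    convert hC.add_mem_closure (hC.smul_mem_closure coneGauge_nonneg hxy) hyx using 1
    rw [smul_sub, smul_smul, sub_smul, one_smul, mul_comm]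
    abel
  linarith [hC.nonneg_of_smul_mem_closure hy h]

theorem eq_coneGauge_smul_of_mul_eq_one (hC : IsProperCone C) (hx : x ∈ C) (hy : y ∈ C)
    (h : coneGauge C x y * coneGauge C y x = 1) : x = coneGauge C x y • y := by
  have hxy : coneGauge C x y • y - x ∈ closure C := hC.coneGauge_smul_sub_mem hy
  have hyx : coneGauge C y x • x - y ∈ closure C := hC.coneGauge_smul_sub_mem hx
  have hsub : x - coneGauge C x y • y ∈ closure C := by
    simpa [smul_sub, smul_smul, h] using
      hC.smul_mem_closure (coneGauge_nonneg : 0 ≤ coneGauge C x y) hyx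
  have := hC.eq_zero_of_mem_closure_of_neg_mem_closure hxy (by rwa [neg_sub])
  exact (sub_eq_zero.1 this).symm

theorem map_smul_of_coneGauge_reversing [Nontrivial V] (hC : IsProperCone C) {φ : V → V}
    (hmaps : MapsTo φ C C)
    (hrev : ∀ x ∈ C, ∀ y ∈ C, coneGauge C (φ x) (φ y) = coneGauge C y x)
    (hx : x ∈ C) {t : ℝ} (ht : 0 < t) : φ (t • x) = t⁻¹ • φ x := by
  have htx : t • x ∈ C := hC.smul_mem hx ht
  have h₁ : coneGauge C (φ (t • x)) (φ x) = t⁻¹ := by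
    rw [hrev _ htx _ hx, coneGauge_smul_right ht, hC.coneGauge_self hx, mul_one]
  have h₂ : coneGauge C (φ x) (φ (t • x)) = t := by
    rw [hrev _ hx _ htx, hC.coneGauge_smul_left ht, hC.coneGauge_self hx, mul_one]
  have := hC.eq_coneGauge_smul_of_mul_eq_one (hmaps htx) (hmaps hx)
    (by rw [h₁, h₂, inv_mul_cancel₀ ht.ne'])
  rwa [h₁] at this

theorem map_sqrt_smul_of_map_eq_smul [Nontrivial V] (hC : IsProperCone C) {φ : V → V}
    (hmaps : MapsTo φ C C)
    (hrev : ∀ x ∈ C, ∀ y ∈ C, coneGauge C (φ x) (φ y) = coneGauge C y x)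
    (hx : x ∈ C) {μ : ℝ} (hμ : 0 < μ) (hφx : φ x = μ • x) : φ (√μ • x) = √μ • x := by
  have ht : 0 < √μ := Real.sqrt_pos.2 hμ
  rw [hC.map_smul_of_coneGauge_reversing hmaps hrev hx ht, hφx, smul_smul,
    inv_mul_eq_iff_eq_mul₀ ht.ne' |>.2 (Real.mul_self_sqrt hμ.le).symm]

theorem eq_one_of_map_smul_eq_smul [Nontrivial V] (hC : IsProperCone C) {φ : V → V}
    (hrev : ∀ x ∈ C, ∀ y ∈ C, coneGauge C (φ x) (φ y) = coneGauge C y x)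
    (hx : x ∈ C) (hfix : φ x = x) {l : ℝ} (hl : 0 < l) (hfixl : φ (l • x) = l • x) : l = 1 := by
  have hsym := hrev _ (hC.smul_mem hx hl) _ hx
  rw [hfixl, hfix, hC.coneGauge_smul_left hl, coneGauge_smul_right hl, hC.coneGauge_self hx,
    mul_one, mul_one] at hsym
  have hll : l * l = 1 := by
    nth_rw 1 [hsym]
    exact inv_mul_cancel₀ hl.ne'
  nlinarith

theorem exists_pos_le_infDist_add_infDist_neg [FiniteDimensional ℝ V] (hC : IsProperCone C) :
    ∃ a > 0, ∀ u ∈ sphere (0 : V) 1,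
      a ≤ infDist u (closure C) + infDist (-u) (closure C) := by
  have hne : (closure C).Nonempty := ⟨0, hC.zero_mem_closure⟩
  have hpos : ∀ u ∈ sphere (0 : V) 1, 0 < infDist u (closure C) + infDist (-u) (closure C) := by
    intro u hu
    have hu0 : u ≠ 0 := ne_zero_of_mem_unit_sphere ⟨u, hu⟩
    have h₁ : 0 ≤ infDist u (closure C) := infDist_nonneg
    have h₂ : 0 ≤ infDist (-u) (closure C) := infDist_nonneg
    by_cases hmem : u ∈ closure C
    · have hneg : -u ∉ closure C := fun h =>
        hu0 (hC.eq_zero_of_mem_closure_of_neg_mem_closure hmem h)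
      linarith [(isClosed_closure.notMem_iff_infDist_pos hne).1 hneg]
    · linarith [(isClosed_closure.notMem_iff_infDist_pos hne).1 hmem]
  exact (isCompact_sphere 0 1).exists_forall_le' (by fun_prop) hpos

theorem exists_norm_le_of_add_mem_of_sub_mem [FiniteDimensional ℝ V] (hC : IsProperCone C) :
    ∃ K > 0, ∀ x w : V, x + w ∈ closure C → x - w ∈ closure C → ‖w‖ ≤ K * ‖x‖ := by
  obtain ⟨a, ha, hsphere⟩ := hC.exists_pos_le_infDist_add_infDist_neg
  refine ⟨2 / a, by positivity, fun x w hadd hsub => ?_⟩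
  rcases eq_or_ne w 0 with rfl | hw
  · simpa using by positivity
  have hr : 0 < ‖w‖ := norm_pos_iff.2 hw
  have hu : ‖w‖⁻¹ • w ∈ sphere (0 : V) 1 := by simp [norm_smul, hr.ne']
  have h₁ : infDist (‖w‖⁻¹ • w) (closure C) ≤ ‖w‖⁻¹ * ‖x‖ := by
    refine (infDist_le_dist_of_mem (hC.smul_mem_closure_of_pos (inv_pos.2 hr) hadd)).trans_eq ?_
    rw [dist_eq_norm, ← smul_sub, norm_smul, norm_inv, norm_norm, sub_add_cancel_right, norm_neg]
  have h₂ : infDist (-(‖w‖⁻¹ • w)) (closure C) ≤ ‖w‖⁻¹ * ‖x‖ := by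
    refine (infDist_le_dist_of_mem (hC.smul_mem_closure_of_pos (inv_pos.2 hr) hsub)).trans_eq ?_
    rw [dist_eq_norm, ← smul_neg, ← smul_sub, norm_smul, norm_inv, norm_norm,
      show -w - (x - w) = -x by abel, norm_neg]
  have hle : a * ‖w‖ ≤ 2 * ‖x‖ := by
    have := hsphere _ hu
    calc a * ‖w‖ ≤ (2 * (‖w‖⁻¹ * ‖x‖)) * ‖w‖ := by gcongr; linarith
      _ = 2 * ‖x‖ := by field_simp
  rw [div_mul_eq_mul_div, le_div_iff₀ ha]
  linarith

theorem exists_norm_sub_lt_of_hilbertDist_lt [Nontrivial V] [FiniteDimensional ℝ V]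
    (hC : IsProperCone C) {b : V} (hb : b ∈ C) {ε₀ : ℝ} (hε₀ : 0 < ε₀) :
    ∃ ε > 0, ∀ z ∈ C, coneGauge C z b = coneGauge C b z → hilbertDist C z b < ε →
      ‖z - b‖ < ε₀ := by
  obtain ⟨K, hK, hnormal⟩ := hC.exists_norm_le_of_add_mem_of_sub_mem
  set η := ε₀ / (K * ‖b‖ + 1)
  have hη : 0 < η := by positivity
  refine ⟨2 * Real.log (1 + η), by linarith [Real.log_pos (by linarith : 1 < 1 + η)],
    fun z hz hsym hd => ?_⟩
  set m := coneGauge C z b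
  have hm0 : 0 < m := hC.coneGauge_pos hz hb
  have hm1 : 1 ≤ m := by nlinarith [hsym ▸ hC.one_le_coneGauge_mul hz hb]
  have hmη : m < 1 + η := by
    rw [hilbertDist, ← hsym, Real.log_mul hm0.ne' hm0.ne'] at hd
    exact (Real.log_lt_log_iff hm0 (by linarith)).1 (by linarith)
  have hzb : m • b - z ∈ closure C := hC.coneGauge_smul_sub_mem hb
  have hbz : m • z - b ∈ closure C := hsym ▸ hC.coneGauge_smul_sub_mem hz
  have hadd : (m - 1) • b + (z - b) ∈ closure C := by
    convert hC.add_mem_closure (hC.smul_mem_closure (inv_nonneg.2 hm0.le) hbz)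
      (hC.smul_mem_closure (a := (m - 1) ^ 2 / m) (by positivity) (subset_closure hb)) using 1
    match_scalars
    · field_simp
      ring
    · field_simp
  have hsub : (m - 1) • b - (z - b) ∈ closure C := by
    convert hzb using 1
    rw [sub_smul, one_smul]
    abel
  calc ‖z - b‖ ≤ K * ‖(m - 1) • b‖ := hnormal _ _ hadd hsub
    _ = (m - 1) * (K * ‖b‖) := by rw [norm_smul, Real.norm_of_nonneg (by linarith)]; ring
    _ ≤ η * (K * ‖b‖) := by gcongr; linarith
    _ < η * (K * ‖b‖ + 1) := mul_lt_mul_of_pos_left (lt_add_one _) hη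
    _ = ε₀ := div_mul_cancel₀ _ (by positivity)

theorem eventually_hilbertDist_lt [Nontrivial V] (hC : IsProperCone C) {b : V} (hb : b ∈ C)
    {ε : ℝ} (hε : 0 < ε) : ∀ᶠ x in 𝓝 b, hilbertDist C x b < ε := by
  set r := Real.exp (ε / 4)
  have hr : 1 < r := Real.one_lt_exp_iff.2 (by positivity)
  have hrb : r • b - b ∈ C := by
    simpa [sub_smul] using hC.smul_mem hb (by linarith : 0 < r - 1)
  have h₁ : ∀ᶠ x in 𝓝 b, r • b - x ∈ C :=
    (show Continuous fun x : V => r • b - x by fun_prop).continuousAt.eventually_mem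
      (hC.isOpen.mem_nhds hrb)
  have h₂ : ∀ᶠ x in 𝓝 b, r • x - b ∈ C :=
    (show Continuous fun x : V => r • x - b by fun_prop).continuousAt.eventually_mem
      (hC.isOpen.mem_nhds hrb)
  filter_upwards [hC.isOpen.mem_nhds hb, h₁, h₂] with x hx hxb hbx
  have hxb' : coneGauge C x b ≤ r := coneGauge_le_of_smul_sub_mem (by linarith) (subset_closure hxb)
  have hbx' : coneGauge C b x ≤ r := coneGauge_le_of_smul_sub_mem (by linarith) (subset_closure hbx)
  calc hilbertDist C x b ≤ Real.log (r * r) :=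
        Real.log_le_log (mul_pos (hC.coneGauge_pos hx hb) (hC.coneGauge_pos hb hx))
          (mul_le_mul hxb' hbx' coneGauge_nonneg (by linarith))
    _ = ε / 2 := by rw [Real.log_mul (by positivity) (by positivity), Real.log_exp]; ring
    _ < ε := by linarith

end IsProperCone

/-- For a gauge-reversing map `φ` with fixed point `b`, `b` is an isolated fixed point
of `φ` iff the ray of `b` is an isolated fixed point of the induced projective action
(fixed rays being those `x ∈ C` with `φ x = μ • x` for some `μ > 0`, and projective
closeness measured by the Hilbert metric). -/
theorem isolated_fixed_point_iff_projective {V : Type*} [NormedAddCommGroup V]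
    [NormedSpace ℝ V] [FiniteDimensional ℝ V] (C : Set V) (hC : IsProperCone C)
    (φ : V → V) (hmaps : Set.MapsTo φ C C)
    (hrev : ∀ x ∈ C, ∀ y ∈ C, coneGauge C (φ x) (φ y) = coneGauge C y x)
    (b : V) (hb : b ∈ C) (hfix : φ b = b) :
    (∃ ε > (0:ℝ), ∀ x ∈ C, φ x = x → dist x b < ε → x = b) ↔
    (∃ ε > (0:ℝ), ∀ x ∈ C, (∃ μ : ℝ, 0 < μ ∧ φ x = μ • x) →
      hilbertDist C x b < ε → ∃ l : ℝ, 0 < l ∧ x = l • b) := by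
  rcases subsingleton_or_nontrivial V with hV | hV
  · exact ⟨fun _ => ⟨1, one_pos, fun x _ _ _ => ⟨1, one_pos, Subsingleton.elim _ _⟩⟩,
      fun _ => ⟨1, one_pos, fun x _ _ _ => Subsingleton.elim _ _⟩⟩
  constructor
  · rintro ⟨ε₀, hε₀, hiso⟩
    obtain ⟨ε, hε, hnear⟩ := hC.exists_norm_sub_lt_of_hilbertDist_lt hb hε₀
    refine ⟨ε, hε, fun x hx ⟨μ, hμ, hφx⟩ hd => ?_⟩
    have ht : 0 < √μ := Real.sqrt_pos.2 hμ
    have htx : √μ • x ∈ C := hC.smul_mem hx ht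
    have hfixz := hC.map_sqrt_smul_of_map_eq_smul hmaps hrev hx hμ hφx
    have hsym : coneGauge C (√μ • x) b = coneGauge C b (√μ • x) := by
      simpa [hfixz, hfix] using hrev _ htx _ hb
    have hzb : √μ • x = b := hiso _ htx hfixz <| by
      rw [dist_eq_norm]
      exact hnear _ htx hsym (by rwa [hC.hilbertDist_smul_left ht])
    exact ⟨(√μ)⁻¹, inv_pos.2 ht, by rw [← hzb, inv_smul_smul₀ ht.ne']⟩
  · rintro ⟨ε, hε, hiso⟩
    obtain ⟨δ, hδ, hball⟩ := Metric.eventually_nhds_iff.1 (hC.eventually_hilbertDist_lt hb hε)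
    refine ⟨δ, hδ, fun x hx hφx hxb => ?_⟩
    obtain ⟨l, hl, rfl⟩ := hiso x hx ⟨1, one_pos, by rw [hφx, one_smul]⟩ (hball hxb)
    rw [hC.eq_one_of_map_smul_eq_smul hrev hb hfix hl hφx, one_smul]
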